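/- Let P, P' be disjoint finite weighted point sets in ℝ^d, Q a (1+γ, η₁, η₂)-semicoreset of P and Q' a (1+γ, η₁, η₂)-semicoreset of P'. Then Q ∪ Q' is a (1+γ, η₁, 2η₂)-semicoreset of P ∪ P'. -/
import Mathlib


open Finset

noncomputable def kcost {d : ℕ} (C P : Finset (EuclideanSpace ℝ (Fin d)))
    (w : EuclideanSpace ℝ (Fin d) → ℝ) : ℝ :=
  ∑ p ∈ P, w p * sInf ((fun c => dist p c ^ 2) '' C)

/-- merging two (1+γ, η₁, η₂)-semicoresets of disjoint sets yields a
(1+γ, η₁, 2η₂)-semicoreset of the union. -/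
theorem merge_semicoreset {d k : ℕ} [DecidableEq (EuclideanSpace ℝ (Fin d))] (γ η1 η2 : ℝ) (hγ : 0 < γ)
    (hη1 : 0 ≤ η1) (hη2 : 0 ≤ η2)
    (P P' Q Q' : Finset (EuclideanSpace ℝ (Fin d)))
    (wQ : EuclideanSpace ℝ (Fin d) → ℝ)
    (hdisj : Disjoint P P') (hQP : Q ⊆ P) (hQ'P' : Q' ⊆ P')
    (CoptP CoptP' Copt : Finset (EuclideanSpace ℝ (Fin d)))
    (hCoptP : CoptP.card = k) (hCoptP' : CoptP'.card = k) (hCopt : Copt.card = k)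
    (hoptP : ∀ C : Finset (EuclideanSpace ℝ (Fin d)), C.card = k →
      kcost CoptP P (fun _ => 1) ≤ kcost C P (fun _ => 1))
    (hoptP' : ∀ C : Finset (EuclideanSpace ℝ (Fin d)), C.card = k →
      kcost CoptP' P' (fun _ => 1) ≤ kcost C P' (fun _ => 1))
    (hoptU : ∀ C : Finset (EuclideanSpace ℝ (Fin d)), C.card = k →
      kcost Copt (P ∪ P') (fun _ => 1) ≤ kcost C (P ∪ P') (fun _ => 1))
    (hQ : ∀ C : Finset (EuclideanSpace ℝ (Fin d)), C.card = k →
      kcost C P (fun _ => 1) / (1 + γ) - η1 * kcost CoptP P (fun _ => 1) - η2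
          ≤ kcost C Q wQ ∧
        kcost C Q wQ ≤ (1 + γ) * kcost C P (fun _ => 1) + η2)
    (hQ' : ∀ C : Finset (EuclideanSpace ℝ (Fin d)), C.card = k →
      kcost C P' (fun _ => 1) / (1 + γ) - η1 * kcost CoptP' P' (fun _ => 1) - η2
          ≤ kcost C Q' wQ ∧
        kcost C Q' wQ ≤ (1 + γ) * kcost C P' (fun _ => 1) + η2) :
    ∀ C : Finset (EuclideanSpace ℝ (Fin d)), C.card = k →
      kcost C (P ∪ P') (fun _ => 1) / (1 + γ)
          - η1 * kcost Copt (P ∪ P') (fun _ => 1) - 2 * η2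
          ≤ kcost C (Q ∪ Q') wQ ∧
        kcost C (Q ∪ Q') wQ ≤ (1 + γ) * kcost C (P ∪ P') (fun _ => 1) + 2 * η2 := by
  intro C hC
  have hdisjQ : Disjoint Q Q' := hdisj.mono hQP hQ'P'
  have hsplit : ∀ (S S' : Finset (EuclideanSpace ℝ (Fin d)))
      (w : EuclideanSpace ℝ (Fin d) → ℝ), Disjoint S S' →
      kcost C (S ∪ S') w = kcost C S w + kcost C S' w := by
    intro S S' w h
    exact Finset.sum_union h
  obtain ⟨h1, h2⟩ := hQ C hC
  obtain ⟨h1', h2'⟩ := hQ' C hC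
  have e1 := hsplit P P' (fun _ => 1) hdisj
  have e2 := hsplit Q Q' wQ hdisjQ
  have eopt := hsplit P P' (fun _ => 1) hdisj
  have hoptsplit : kcost Copt (P ∪ P') (fun _ => 1)
      = kcost Copt P (fun _ => 1) + kcost Copt P' (fun _ => 1) :=
    Finset.sum_union hdisj
  have hP1 : kcost CoptP P (fun _ => 1) ≤ kcost Copt P (fun _ => 1) := hoptP Copt hCopt
  have hP2 : kcost CoptP' P' (fun _ => 1) ≤ kcost Copt P' (fun _ => 1) := hoptP' Copt hCopt
  have hη1a : η1 * kcost CoptP P (fun _ => 1) ≤ η1 * kcost Copt P (fun _ => 1) :=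
    mul_le_mul_of_nonneg_left hP1 hη1
  have hη1b : η1 * kcost CoptP' P' (fun _ => 1) ≤ η1 * kcost Copt P' (fun _ => 1) :=
    mul_le_mul_of_nonneg_left hP2 hη1
  have hγ' : (0:ℝ) < 1 + γ := by linarith
  constructor
  · rw [e1, e2, add_div]
    rw [hoptsplit]
    nlinarith [h1, h1', hη1a, hη1b]
  · rw [e1, e2]
    nlinarith [h2, h2']
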